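/- arXiv:1810.11848 — 7 statements merged into one kernel-verified Lean document; each statement's English description precedes it below -/
import Mathlib

section
/- Let K be a field of characteristic zero and V a finite-dimensional K-vector space. Let B and B' be alternating bilinear forms on V, both nonzero, such that the wedge product B∧B' vanishes identically as an alternating 4-linear form on V. Then there exists a subspace N ⊆ V with dim V − dim N ≤ 4 such that N is contained in the radical of B and in the radical of B'; equivalently, there is a quotient V → V' with dim V' ≤ 4 such that both B and B' are pulled back from bilinear forms on V'. -/
def wedgeProd {K V : Type*} [CommRing K] (B B' : V → V → K)
    (x₁ x₂ x₃ x₄ : V) : K :=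
  B x₁ x₂ * B' x₃ x₄ - B x₁ x₃ * B' x₂ x₄ + B x₁ x₄ * B' x₂ x₃
    + B' x₁ x₂ * B x₃ x₄ - B' x₁ x₃ * B x₂ x₄ + B' x₁ x₄ * B x₂ x₃

/-!
If `B` and `B'` both have rank at most two, their common radical contains the common kernel of
four linear forms. Otherwise, say `B` has rank greater than two. If `v` lies in the radical of `B`
and `B'(v, w) ≠ 0`, then `B ∧ B' = 0` at `(v, w, x, y)` writes `B` as `(B' v ∧ B w) / B'(v, w)`;
so the radical of `B` lies in that of `B'`. If moreover `B'` vanished wherever `B` does, then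
`B' x` would be proportional to `B x` for each `x`, and `B ∧ B' = 0` at a pair `(a, b)` with
`c = B(a, b) ≠ 0` would give `c² B' = μ (2 B a ∧ B b - c B)` with `μ = B'(a, b) ≠ 0`; in
characteristic zero this forces `B` to have rank two. Hence `B(p, q) = 0 ≠ B'(p, q)` for some
`p`, `q`, and `B ∧ B' = 0` at `(v, u, p, q)` puts `v` in the radical of `B` as soon as `B v` and
`B' v` vanish at `p` and `q`.
-/

open Module LinearMap

theorem apply_mul_apply_comm_of_ker_le {R M : Type*} [CommRing R] [AddCommGroup M] [Module R M]
    {φ ψ : M →ₗ[R] R} (h : ker ψ ≤ ker φ) (x y : M) : φ x * ψ y = φ y * ψ x := by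
  have hmem : ψ y • x - ψ x • y ∈ ker ψ := by simp [mul_comm]
  have := h hmem
  simp only [mem_ker, map_sub, map_smul, smul_eq_mul] at this
  linear_combination this

section

variable {K V : Type*} [Field K] [AddCommGroup V] [Module K V]

theorem finrank_sub_finrank_iInf_ker_le [FiniteDimensional K V] {ι : Type*} [Fintype ι]
    (f : ι → Dual K V) :
    finrank K V - finrank K (⨅ i, ker (f i) : Submodule K V) ≤ Fintype.card ι := by
  have hrank := (LinearMap.pi f).finrank_range_add_finrank_ker
  have hrange := Submodule.finrank_le (range (LinearMap.pi f))
  rw [ker_pi] at hrank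
  rw [Module.finrank_fintype_fun_eq_card] at hrange
  omega

def IsRankLeTwo (B : LinearMap.BilinForm K V) : Prop :=
  ∃ α β : Dual K V, ker α ⊓ ker β ≤ ker B

def WedgeVanishes (B B' : LinearMap.BilinForm K V) : Prop :=
  ∀ x₁ x₂ x₃ x₄, wedgeProd (fun u w => B u w) (fun u w => B' u w) x₁ x₂ x₃ x₄ = 0

theorem WedgeVanishes.symm {B B' : LinearMap.BilinForm K V} (hw : WedgeVanishes B B') :
    WedgeVanishes B' B := fun x₁ x₂ x₃ x₄ => by
  rw [← hw x₁ x₂ x₃ x₄]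
  simp only [wedgeProd]
  ring

theorem ker_le_ker_of_not_isRankLeTwo {B B' : LinearMap.BilinForm K V} (hw : WedgeVanishes B B')
    (hB : ¬ IsRankLeTwo B) : ker B ≤ ker B' := by
  intro v hv
  by_contra hv'
  obtain ⟨w, hvw⟩ : ∃ w, B' v w ≠ 0 := by simpa [LinearMap.ext_iff] using hv'
  refine hB ⟨B' v, B w, fun x hx => ?_⟩
  obtain ⟨hvx, hwx⟩ : B' v x = 0 ∧ B w x = 0 := by simpa using hx
  ext y
  have h := hw v w x y
  simp only [wedgeProd, mem_ker.mp hv, LinearMap.zero_apply, hvx, hwx] at h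
  exact (mul_eq_zero.mp (by linear_combination h : B' v w * B x y = 0)).resolve_left hvw

theorem ker_flip_inf_le_ker {B B' : LinearMap.BilinForm K V} (hw : WedgeVanishes B B') {p q : V}
    (hpq : B p q = 0) (hpq' : B' p q ≠ 0) :
    ker (B.flip p) ⊓ ker (B.flip q) ⊓ ker (B'.flip p) ⊓ ker (B'.flip q) ≤ ker B := by
  intro v hv
  simp only [Submodule.mem_inf, mem_ker, BilinForm.flip_apply] at hv
  obtain ⟨⟨⟨hvp, hvq⟩, hvp'⟩, hvq'⟩ := hv
  ext u
  have h := hw v u p q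
  simp only [wedgeProd, hvp, hvq, hvp', hvq', hpq] at h
  exact (mul_eq_zero.mp (by linear_combination h : B v u * B' p q = 0)).resolve_right hpq'

theorem isRankLeTwo_of_ker_le_ker [CharZero K] {B B' : LinearMap.BilinForm K V}
    (hAlt : LinearMap.IsAlt B) (hAlt' : LinearMap.IsAlt B') (hB : B ≠ 0) (hB' : B' ≠ 0)
    (hw : WedgeVanishes B B')
    (hker : ∀ x, ker (B x) ≤ ker (B' x)) : IsRankLeTwo B := by
  obtain ⟨a, b, hab⟩ : ∃ a b, B a b ≠ 0 := by simpa [LinearMap.ext_iff] using hB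
  have hBa (w : V) : B' a w * B a b = B' a b * B a w := apply_mul_apply_comm_of_ker_le (hker a) w b
  have hBb (w : V) : B' b w * B a b = B' a b * B b w := by
    have h := apply_mul_apply_comm_of_ker_le (hker b) w a
    rw [← hAlt.neg a b, ← hAlt'.neg a b] at h
    linear_combination -h
  have hB'_eq (x y : V) : B a b ^ 2 * B' x y =
      B' a b * (2 * (B a x * B b y - B a y * B b x) - B a b * B x y) := by
    have h := hw a b x y
    simp only [wedgeProd] at h
    linear_combination B a b * h + B a x * hBb y - B a y * hBb x + B b y * hBa x - B b x * hBa y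
  have hμ : B' a b ≠ 0 := by
    intro hμ
    refine hB' (LinearMap.ext₂ fun x y => ?_)
    simpa [hμ, hab] using hB'_eq x y
  refine ⟨B a, B b, fun v hv => ?_⟩
  obtain ⟨hav, hbv⟩ : B a v = 0 ∧ B b v = 0 := by simpa using hv
  have hba : B b a = -B a b := by rw [← hAlt.neg a b]
  have hvb : B v b = 0 := by rw [← hAlt.neg b v, hbv, neg_zero]
  have hker_a : ker (B (v + a)) ≤ ker (B a) := by
    intro y hy
    have h := hB'_eq (v + a) y
    rw [mem_ker] at hy
    rw [mem_ker.mp (hker _ hy), hy, map_add, map_add, hav, hAlt.self_eq_zero, hbv, hba] at h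
    rw [mem_ker]
    have h2 : (2 * B' a b * B a b) * B a y = 0 := by linear_combination -h
    exact (mul_eq_zero.mp h2).resolve_left (by simp [hμ, hab])
  ext y
  have h := apply_mul_apply_comm_of_ker_le hker_a b y
  simp only [map_add, LinearMap.add_apply, hvb, zero_add] at h
  exact (mul_eq_zero.mp (by linear_combination h : B a b * B v y = 0)).resolve_left hab

theorem exists_ker_inf_le_ker_inf_ker [CharZero K] {B B' : LinearMap.BilinForm K V}
    (hAlt : LinearMap.IsAlt B) (hAlt' : LinearMap.IsAlt B') (hB : B ≠ 0) (hB' : B' ≠ 0)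
    (hw : WedgeVanishes B B') :
    ∃ f₁ f₂ f₃ f₄ : Dual K V, ker f₁ ⊓ ker f₂ ⊓ ker f₃ ⊓ ker f₄ ≤ ker B ⊓ ker B' := by
  wlog hB2 : ¬ IsRankLeTwo B generalizing B B'
  · by_cases hB'2 : IsRankLeTwo B'
    · obtain ⟨α, β, hαβ⟩ := not_not.mp hB2
      obtain ⟨α', β', hαβ'⟩ := hB'2
      exact ⟨α, β, α', β', by rw [inf_assoc]; exact inf_le_inf hαβ hαβ'⟩
    · obtain ⟨f₁, f₂, f₃, f₄, hf⟩ := this hAlt' hAlt hB' hB hw.symm hB'2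
      exact ⟨f₁, f₂, f₃, f₄, hf.trans_eq (inf_comm _ _)⟩
  obtain ⟨p, q, hpq, hpq'⟩ : ∃ p q, B p q = 0 ∧ B' p q ≠ 0 := by
    by_contra! h
    exact hB2 (isRankLeTwo_of_ker_le_ker hAlt hAlt' hB hB' hw fun x y hy => h x y hy)
  have hN := ker_flip_inf_le_ker hw hpq hpq'
  exact ⟨_, _, _, _, le_inf hN (hN.trans (ker_le_ker_of_not_isRankLeTwo hw hB2))⟩

end

/-- Lemma 1.13 (lemmeutilesurproduit): if `B`, `B'` are nonzero alternating bilinear forms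
on a finite-dimensional vector space `V` over a field of characteristic zero with
`B∧B' = 0` as an alternating 4-linear form, then there is a subspace `N ⊆ V` of
codimension at most 4 contained in the radical of both `B` and `B'`. -/
theorem vanishing_wedge_common_radical
    {K V : Type*} [Field K] [CharZero K] [AddCommGroup V] [Module K V]
    [FiniteDimensional K V]
    (B B' : LinearMap.BilinForm K V)
    (hAltB : LinearMap.IsAlt B) (hAltB' : LinearMap.IsAlt B')
    (hB : B ≠ 0) (hB' : B' ≠ 0)
    (hw : ∀ x₁ x₂ x₃ x₄ : V,
      wedgeProd (fun u w => B u w) (fun u w => B' u w) x₁ x₂ x₃ x₄ = 0) :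
    ∃ N : Submodule K V,
      Module.finrank K V - Module.finrank K N ≤ 4 ∧
      ∀ v ∈ N, ∀ w : V, B v w = 0 ∧ B' v w = 0 := by
  obtain ⟨f₁, f₂, f₃, f₄, hf⟩ := exists_ker_inf_le_ker_inf_ker hAltB hAltB' hB hB' hw
  refine ⟨ker f₁ ⊓ ker f₂ ⊓ ker f₃ ⊓ ker f₄, ?_, fun v hv w => ?_⟩
  · have hN : ker f₁ ⊓ ker f₂ ⊓ ker f₃ ⊓ ker f₄ = ⨅ i, ker (![f₁, f₂, f₃, f₄] i) := by
      ext v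
      simp [Submodule.mem_iInf, Fin.forall_fin_succ, and_assoc]
    rw [hN]
    exact finrank_sub_finrank_iInf_ker_le ![f₁, f₂, f₃, f₄]
  · obtain ⟨hBv, hB'v⟩ := Submodule.mem_inf.mp (hf hv)
    exact ⟨LinearMap.congr_fun (mem_ker.mp hBv) w, LinearMap.congr_fun (mem_ker.mp hB'v) w⟩
end

section
/- Let K be a field of characteristic zero and V a finite-dimensional K-vector space. Let B and B' be alternating bilinear forms on V, both nonzero, such that the wedge product B∧B' vanishes identically as an alternating 4-linear form on V. Then the rank of B is at most 4 and the rank of B' is at most 4, where the rank of an alternating bilinear form B is the rank of the associated linear map V → V*, v ↦ B(v,·). -/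
theorem wedgeProd_comm {K V : Type*} [CommRing K] (B B' : V → V → K) :
    wedgeProd B B' = wedgeProd B' B := by
  funext x₁ x₂ x₃ x₄
  simp only [wedgeProd]
  ring

namespace LinearMap

theorem rank_le_of_range_le_span {R M N : Type*} [Ring R] [StrongRankCondition R]
    [AddCommGroup M] [Module R M] [AddCommGroup N] [Module R N] (f : M →ₗ[R] N) {n : ℕ}
    (g : Fin n → N) (h : range f ≤ Submodule.span R (Set.range g)) : f.rank ≤ n :=
  calc f.rank ≤ Module.rank R (Submodule.span R (Set.range g)) := Submodule.rank_mono h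
    _ ≤ Cardinal.mk (Set.range g) := rank_span_le _
    _ ≤ n := by simpa using Cardinal.mk_range_le_lift (f := g)

theorem exists_apply_ne_zero_and_apply_ne_zero {R M N P : Type*} [Semiring R]
    [AddCommMonoid M] [Module R M] [AddCommMonoid N] [Module R N] [AddCommMonoid P] [Module R P]
    {f : M →ₗ[R] N} {g : M →ₗ[R] P} (hf : f ≠ 0) (hg : g ≠ 0) :
    ∃ v, f v ≠ 0 ∧ g v ≠ 0 := by
  obtain ⟨u, hu⟩ := DFunLike.ne_iff.mp hf
  obtain ⟨w, hw⟩ := DFunLike.ne_iff.mp hg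
  by_cases hgu : g u = 0
  · by_cases hfw : f w = 0
    · exact ⟨u + w, by simpa [hfw] using hu, by simpa [hgu] using hw⟩
    · exact ⟨w, hfw, hw⟩
  · exact ⟨u, hu, hgu⟩

variable {K V : Type*} [Field K] [AddCommGroup V] [Module K V]

theorem exists_eq_smul_of_ker_le_ker {f g : V →ₗ[K] K} (h : ker f ≤ ker g) :
    ∃ c : K, g = c • f := by
  have hspan : g ∈ Submodule.span K (Set.range fun _ : Unit => f) :=
    mem_span_of_iInf_ker_le_ker (by simpa using h)
  obtain ⟨c, hc⟩ := (Submodule.mem_span_range_iff_exists_fun K).mp hspan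
  exact ⟨c (), by simpa using hc.symm⟩

namespace IsAlt

theorem exists_eq_smul_of_forall_eq_zero {B B' : LinearMap.BilinForm K V} (hB : IsAlt B)
    (hB' : IsAlt B') (h : ∀ a b, B a b = 0 → B' a b = 0) : ∃ c : K, B' = c • B := by
  have hpointwise (a : V) : ∃ c : K, B' a = c • B a :=
    exists_eq_smul_of_ker_le_ker fun v hv => h a v hv
  choose c hc using hpointwise
  have hconst (a b : V) (hab : B a b ≠ 0) : c a = c b := by
    have hba : B' b a = c b * B b a := by simp [hc b]
    rw [← IsAlt.neg hB' a b, ← IsAlt.neg hB a b, hc a, smul_apply, smul_eq_mul, mul_neg,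
      neg_inj] at hba
    exact mul_right_cancel₀ hab hba
  by_cases hB0 : B = 0
  · exact ⟨0, by ext a b; simp [h a b (by simp [hB0])]⟩
  obtain ⟨a₀, ha₀⟩ : ∃ a₀, B a₀ ≠ 0 := by
    by_contra! hB0'
    exact hB0 (ext hB0')
  refine ⟨c a₀, ext fun u => ?_⟩
  by_cases hu : B u = 0
  · simp [hc u, hu]
  · obtain ⟨v, huv, ha₀v⟩ := exists_apply_ne_zero_and_apply_ne_zero hu ha₀
    rw [hc u, hconst u v huv, ← hconst a₀ v ha₀v, smul_apply]

end IsAlt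

end LinearMap

section Wedge

variable {K V : Type*} [Field K] [AddCommGroup V] [Module K V] {B B' : LinearMap.BilinForm K V}

theorem rank_smul_add_smul_le_four_of_wedgeProd_eq_zero
    (hw : ∀ x₁ x₂ x₃ x₄ : V, wedgeProd (fun u w => B u w) (fun u w => B' u w) x₁ x₂ x₃ x₄ = 0)
    (a b : V) : LinearMap.rank (B' a b • B + B a b • B') ≤ 4 := by
  refine LinearMap.rank_le_of_range_le_span _ ![B.flip a, B.flip b, B'.flip a, B'.flip b] ?_
  rintro _ ⟨u, rfl⟩
  refine (Submodule.mem_span_range_iff_exists_fun K).mpr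
    ⟨![-B' u b, B' u a, -B u b, B u a], LinearMap.ext fun v => ?_⟩
  have huvab := hw u v a b
  simp only [wedgeProd] at huvab
  simp only [Fin.sum_univ_four, Matrix.cons_val, LinearMap.add_apply, LinearMap.smul_apply,
    LinearMap.BilinForm.flip_apply, smul_eq_mul]
  linear_combination -huvab

theorem rank_le_four_of_wedgeProd_eq_zero [NeZero (2 : K)] (hB : LinearMap.IsAlt B)
    (hB' : LinearMap.IsAlt B') (hB'0 : B' ≠ 0)
    (hw : ∀ x₁ x₂ x₃ x₄ : V, wedgeProd (fun u w => B u w) (fun u w => B' u w) x₁ x₂ x₃ x₄ = 0) :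
    LinearMap.rank B ≤ 4 := by
  suffices ∃ a b, ∃ c : K, c ≠ 0 ∧ B' a b • B + B a b • B' = c • B by
    obtain ⟨a, b, c, hc, hcB⟩ := this
    rw [LinearMap.rank, ← LinearMap.range_smul B c hc, ← hcB]
    exact rank_smul_add_smul_le_four_of_wedgeProd_eq_zero hw a b
  by_cases hprop : ∀ a b, B a b = 0 → B' a b = 0
  · obtain ⟨c, rfl⟩ := hB.exists_eq_smul_of_forall_eq_zero hB' hprop
    obtain ⟨hc, hB0⟩ := smul_ne_zero_iff.mp hB'0
    obtain ⟨a, b, hab⟩ : ∃ a b, B a b ≠ 0 := by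
      by_contra! hB0'
      exact hB0 (LinearMap.ext₂ hB0')
    refine ⟨a, b, 2 * c * B a b, by simp [hc, hab, two_ne_zero], ?_⟩
    simp only [LinearMap.smul_apply, smul_eq_mul]
    module
  · push Not at hprop
    obtain ⟨a, b, hab, hab'⟩ := hprop
    exact ⟨a, b, B' a b, hab', by simp [hab]⟩

end Wedge

theorem vanishing_wedge_rank_le_four_general
    {K V : Type*} [Field K] [CharZero K] [AddCommGroup V] [Module K V]
    (B B' : LinearMap.BilinForm K V)
    (hAltB : LinearMap.IsAlt B) (hAltB' : LinearMap.IsAlt B')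
    (hB : B ≠ 0) (hB' : B' ≠ 0)
    (hw : ∀ x₁ x₂ x₃ x₄ : V,
      wedgeProd (fun u w => B u w) (fun u w => B' u w) x₁ x₂ x₃ x₄ = 0) :
    LinearMap.rank (B : V →ₗ[K] V →ₗ[K] K) ≤ 4 ∧
      LinearMap.rank (B' : V →ₗ[K] V →ₗ[K] K) ≤ 4 := by
  refine ⟨rank_le_four_of_wedgeProd_eq_zero hAltB hAltB' hB' hw,
    rank_le_four_of_wedgeProd_eq_zero hAltB' hAltB hB fun x₁ x₂ x₃ x₄ => ?_⟩
  rw [wedgeProd_comm]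
  exact hw x₁ x₂ x₃ x₄

/-- If `B`, `B'` are nonzero alternating bilinear forms on a finite-dimensional
vector space over a field of characteristic zero with `B∧B' = 0`, then both `B`
and `B'` have rank at most 4, where the rank of a bilinear form is the rank of
the associated linear map `V → V*`, `v ↦ B(v,·)`. -/
theorem vanishing_wedge_rank_le_four
    {K V : Type*} [Field K] [CharZero K] [AddCommGroup V] [Module K V]
    [FiniteDimensional K V]
    (B B' : LinearMap.BilinForm K V)
    (hAltB : LinearMap.IsAlt B) (hAltB' : LinearMap.IsAlt B')
    (hB : B ≠ 0) (hB' : B' ≠ 0)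
    (hw : ∀ x₁ x₂ x₃ x₄ : V,
      wedgeProd (fun u w => B u w) (fun u w => B' u w) x₁ x₂ x₃ x₄ = 0) :
    LinearMap.rank (B : V →ₗ[K] V →ₗ[K] K) ≤ 4 ∧
      LinearMap.rank (B' : V →ₗ[K] V →ₗ[K] K) ≤ 4 :=
  vanishing_wedge_rank_le_four_general B B' hAltB hAltB' hB hB' hw
end

section
/- Let K be a field of characteristic zero, let g ≥ 13 be an integer, and let V₁, V₂, V₃ be K-vector spaces, each of dimension 2g, equipped with nondegenerate alternating bilinear forms ω₁, ω₂, ω₃ respectively. Let V = V₁ × V₂ × V₃ and let ω̃₁, ω̃₂, ω̃₃ denote the pullbacks of ω₁, ω₂, ω₃ to V via the projections. Then there do not exist alternating bilinear forms B' and B'' on V such that ω̃₁∧ω̃₂ + ω̃₂∧ω̃₃ + ω̃₁∧ω̃₃ = B'∧B'' as alternating 4-linear forms on V. -/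
open Module

theorem exists_ne_zero_forall_apply_eq_zero {K X ι : Type*} [Field K] [AddCommGroup X]
    [Module K X] [FiniteDimensional K X] [Fintype ι] (f : ι → Dual K X)
    (h : Fintype.card ι < finrank K X) : ∃ x ≠ 0, ∀ i, f i x = 0 := by
  rw [← finrank_fintype_fun_eq_card K] at h
  obtain ⟨x, hx, hx0⟩ := Submodule.exists_mem_ne_zero_of_ne_bot
    (LinearMap.ker_ne_bot_of_finrank_lt (f := LinearMap.pi f) h)
  exact ⟨x, hx0, congrFun (LinearMap.mem_ker.1 hx)⟩

namespace LinearMap.BilinForm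

variable {K X : Type*} [Field K] [AddCommGroup X] [Module K X] {ω : LinearMap.BilinForm K X}

theorem exists_apply_eq_one [Nontrivial X] (hω : ω.SeparatingLeft) : ∃ u v, ω u v = 1 := by
  obtain ⟨u, hu⟩ := exists_ne (0 : X)
  obtain ⟨w, hw⟩ : ∃ w, ω u w ≠ 0 := by
    by_contra! h
    exact hu (hω u h)
  exact ⟨u, (ω u w)⁻¹ • w, by simp [hw]⟩

theorem eq_zero_of_mul_apply_eq_zero_of_forall_apply_eq_zero [FiniteDimensional K X]
    {ι : Type*} [Fintype ι] (hω : ω.SeparatingLeft) (f : ι → Dual K X)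
    (h : Fintype.card ι < finrank K X) {c : K}
    (hc : ∀ p, (∀ i, f i p = 0) → ∀ q, c * ω p q = 0) : c = 0 := by
  obtain ⟨p, hp0, hp⟩ := exists_ne_zero_forall_apply_eq_zero f h
  by_contra hc0
  exact hp0 (hω p fun q => (mul_eq_zero.1 (hc p hp q)).resolve_left hc0)

end LinearMap.BilinForm

theorem wedgeProd_eq_of_apply_eq_zero {K V : Type*} [CommRing K] {B B' : V → V → K}
    {u v x : V} (hu : B u x = 0) (hv : B v x = 0) (hu' : B' u x = 0) (hv' : B' v x = 0)
    (y : V) : wedgeProd B B' u v x y = B u v * B' x y + B' u v * B x y := by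
  simp only [wedgeProd, hu, hv, hu', hv']
  ring

section Contraction

variable {K V ι : Type*} [Field K] [AddCommGroup V] [Module K V] [Fintype ι]

def contractionFunctionals (B B' : LinearMap.BilinForm K V) (P Q : ι → V) (k : ι × Fin 4) :
    Dual K V :=
  ![B (P k.1), B (Q k.1), B' (P k.1), B' (Q k.1)] k.2

theorem exists_sum_mul_wedgeProd_eq_zero (B B' : LinearMap.BilinForm K V) (P Q : ι → V)
    (hι : 2 < Fintype.card ι) :
    ∃ c : ι → K, c ≠ 0 ∧ ∀ x, (∀ k, contractionFunctionals B B' P Q k x = 0) →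
      ∀ y, ∑ i, c i * wedgeProd (fun u w => B u w) (fun u w => B' u w) (P i) (Q i) x y
        = 0 := by
  obtain ⟨c, hc, i, hci⟩ := (Fintype.not_linearIndependent_iff (R := K)).1 fun h =>
    (h.fintype_card_le_finrank (b := fun i => (B (P i) (Q i), B' (P i) (Q i)))).not_gt
      (by rwa [finrank_prod, finrank_self])
  have hc₁ : ∑ i, c i * B (P i) (Q i) = 0 := by
    simpa [Prod.fst_sum] using congrArg Prod.fst hc
  have hc₂ : ∑ i, c i * B' (P i) (Q i) = 0 := by
    simpa [Prod.snd_sum] using congrArg Prod.snd hc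
  refine ⟨c, fun h => hci (congrFun h i), fun x hx y => ?_⟩
  calc ∑ i, c i * wedgeProd (fun u w => B u w) (fun u w => B' u w) (P i) (Q i) x y
      = (∑ i, c i * B (P i) (Q i)) * B' x y + (∑ i, c i * B' (P i) (Q i)) * B x y := by
        rw [Finset.sum_mul, Finset.sum_mul, ← Finset.sum_add_distrib]
        refine Finset.sum_congr rfl fun i _ => ?_
        have hPB : B (P i) x = 0 := hx (i, 0)
        have hQB : B (Q i) x = 0 := hx (i, 1)
        have hPB' : B' (P i) x = 0 := hx (i, 2)
        have hQB' : B' (Q i) x = 0 := hx (i, 3)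
        rw [wedgeProd_eq_of_apply_eq_zero hPB hQB hPB' hQB']
        ring
    _ = 0 := by rw [hc₁, hc₂]; ring

end Contraction

section Pullback

variable {K V₁ V₂ V₃ : Type*} [CommRing K] [AddCommGroup V₁] [Module K V₁]
  [AddCommGroup V₂] [Module K V₂] [AddCommGroup V₃] [Module K V₃]
  (ω₁ : LinearMap.BilinForm K V₁) (ω₂ : LinearMap.BilinForm K V₂)
  (ω₃ : LinearMap.BilinForm K V₃)

def pullbackWedgeSum (x₁ x₂ x₃ x₄ : V₁ × V₂ × V₃) : K :=
  wedgeProd (fun u w => ω₁ u.1 w.1) (fun u w => ω₂ u.2.1 w.2.1) x₁ x₂ x₃ x₄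
    + wedgeProd (fun u w => ω₂ u.2.1 w.2.1) (fun u w => ω₃ u.2.2 w.2.2) x₁ x₂ x₃ x₄
    + wedgeProd (fun u w => ω₁ u.1 w.1) (fun u w => ω₃ u.2.2 w.2.2) x₁ x₂ x₃ x₄

variable {ω₁ ω₂ ω₃}

theorem sum_mul_pullbackWedgeSum {u₁ v₁ : V₁} {u₂ v₂ : V₂} {u₃ v₃ : V₃}
    (h₁ : ω₁ u₁ v₁ = 1) (h₂ : ω₂ u₂ v₂ = 1) (h₃ : ω₃ u₃ v₃ = 1) (c : Fin 3 → K)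
    (x y : V₁ × V₂ × V₃) :
    ∑ i, c i * pullbackWedgeSum ω₁ ω₂ ω₃ (![(u₁, 0, 0), (0, u₂, 0), (0, 0, u₃)] i)
        (![(v₁, 0, 0), (0, v₂, 0), (0, 0, v₃)] i) x y
      = (c 1 + c 2) * ω₁ x.1 y.1 + (c 0 + c 2) * ω₂ x.2.1 y.2.1
        + (c 0 + c 1) * ω₃ x.2.2 y.2.2 := by
  simp only [Fin.sum_univ_three, Matrix.cons_val_zero, Matrix.cons_val_one, Matrix.cons_val,
    pullbackWedgeSum, wedgeProd, h₁, h₂, h₃, map_zero, LinearMap.zero_apply]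
  ring

end Pullback

theorem eq_zero_of_pullback_sum_eq_zero {K V₁ V₂ V₃ ι : Type*} [Field K]
    [AddCommGroup V₁] [Module K V₁] [FiniteDimensional K V₁]
    [AddCommGroup V₂] [Module K V₂] [FiniteDimensional K V₂]
    [AddCommGroup V₃] [Module K V₃] [FiniteDimensional K V₃] [Fintype ι]
    {ω₁ : LinearMap.BilinForm K V₁} {ω₂ : LinearMap.BilinForm K V₂}
    {ω₃ : LinearMap.BilinForm K V₃} (hω₁ : ω₁.SeparatingLeft) (hω₂ : ω₂.SeparatingLeft)
    (hω₃ : ω₃.SeparatingLeft) (f : ι → Dual K (V₁ × V₂ × V₃))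
    (h₁ : Fintype.card ι < finrank K V₁) (h₂ : Fintype.card ι < finrank K V₂)
    (h₃ : Fintype.card ι < finrank K V₃) {a₁ a₂ a₃ : K}
    (ha : ∀ x, (∀ i, f i x = 0) → ∀ y : V₁ × V₂ × V₃,
      a₁ * ω₁ x.1 y.1 + a₂ * ω₂ x.2.1 y.2.1 + a₃ * ω₃ x.2.2 y.2.2 = 0) :
    a₁ = 0 ∧ a₂ = 0 ∧ a₃ = 0 :=
  ⟨LinearMap.BilinForm.eq_zero_of_mul_apply_eq_zero_of_forall_apply_eq_zero hω₁
      (fun i => (f i).comp (LinearMap.inl K V₁ (V₂ × V₃))) h₁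
      fun p hp q => by simpa using ha (p, 0, 0) hp (q, 0, 0),
    LinearMap.BilinForm.eq_zero_of_mul_apply_eq_zero_of_forall_apply_eq_zero hω₂
      (fun i => (f i).comp ((LinearMap.inr K V₁ (V₂ × V₃)).comp (LinearMap.inl K V₂ V₃))) h₂
      fun p hp q => by simpa using ha (0, p, 0) hp (0, q, 0),
    LinearMap.BilinForm.eq_zero_of_mul_apply_eq_zero_of_forall_apply_eq_zero hω₃
      (fun i => (f i).comp ((LinearMap.inr K V₁ (V₂ × V₃)).comp (LinearMap.inr K V₂ V₃))) h₃
      fun p hp q => by simpa using ha (0, 0, p) hp (0, 0, q)⟩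

theorem no_wedge_factorization_of_sum_general
    {K V₁ V₂ V₃ : Type*} [Field K] [CharZero K]
    [AddCommGroup V₁] [Module K V₁] [FiniteDimensional K V₁]
    [AddCommGroup V₂] [Module K V₂] [FiniteDimensional K V₂]
    [AddCommGroup V₃] [Module K V₃] [FiniteDimensional K V₃]
    (g : ℕ) (hg : 13 ≤ g)
    (hd₁ : Module.finrank K V₁ = 2 * g)
    (hd₂ : Module.finrank K V₂ = 2 * g)
    (hd₃ : Module.finrank K V₃ = 2 * g)
    (ω₁ : LinearMap.BilinForm K V₁) (ω₂ : LinearMap.BilinForm K V₂)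
    (ω₃ : LinearMap.BilinForm K V₃)
    (hnd₁ : ∀ v : V₁, (∀ w : V₁, ω₁ v w = 0) → v = 0)
    (hnd₂ : ∀ v : V₂, (∀ w : V₂, ω₂ v w = 0) → v = 0)
    (hnd₃ : ∀ v : V₃, (∀ w : V₃, ω₃ v w = 0) → v = 0) :
    ¬ ∃ B' B'' : LinearMap.BilinForm K (V₁ × V₂ × V₃),
        LinearMap.IsAlt B' ∧ LinearMap.IsAlt B'' ∧
        ∀ x₁ x₂ x₃ x₄ : V₁ × V₂ × V₃,
          wedgeProd (fun u w => ω₁ u.1 w.1) (fun u w => ω₂ u.2.1 w.2.1) x₁ x₂ x₃ x₄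
          + wedgeProd (fun u w => ω₂ u.2.1 w.2.1) (fun u w => ω₃ u.2.2 w.2.2) x₁ x₂ x₃ x₄
          + wedgeProd (fun u w => ω₁ u.1 w.1) (fun u w => ω₃ u.2.2 w.2.2) x₁ x₂ x₃ x₄
          = wedgeProd (fun u w => B' u w) (fun u w => B'' u w) x₁ x₂ x₃ x₄ := by
  rintro ⟨B', B'', -, -, heq⟩
  have : Nontrivial V₁ := nontrivial_of_finrank_pos (R := K) (by omega)
  have : Nontrivial V₂ := nontrivial_of_finrank_pos (R := K) (by omega)
  have : Nontrivial V₃ := nontrivial_of_finrank_pos (R := K) (by omega)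
  obtain ⟨u₁, v₁, h₁⟩ := LinearMap.BilinForm.exists_apply_eq_one hnd₁
  obtain ⟨u₂, v₂, h₂⟩ := LinearMap.BilinForm.exists_apply_eq_one hnd₂
  obtain ⟨u₃, v₃, h₃⟩ := LinearMap.BilinForm.exists_apply_eq_one hnd₃
  have hΩ :
      pullbackWedgeSum ω₁ ω₂ ω₃ = wedgeProd (fun u w => B' u w) (fun u w => B'' u w) := by
    funext x₁ x₂ x₃ x₄
    exact heq x₁ x₂ x₃ x₄
  let P : Fin 3 → V₁ × V₂ × V₃ := ![(u₁, 0, 0), (0, u₂, 0), (0, 0, u₃)]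
  let Q : Fin 3 → V₁ × V₂ × V₃ := ![(v₁, 0, 0), (0, v₂, 0), (0, 0, v₃)]
  obtain ⟨c, hc0, hc⟩ := exists_sum_mul_wedgeProd_eq_zero B' B'' P Q (by simp)
  have hcard : Fintype.card (Fin 3 × Fin 4) < 2 * g := by
    simp only [Fintype.card_prod, Fintype.card_fin]; omega
  obtain ⟨h₂₃, h₁₃, h₁₂⟩ := eq_zero_of_pullback_sum_eq_zero hnd₁ hnd₂ hnd₃
    (contractionFunctionals B' B'' P Q) (hd₁ ▸ hcard) (hd₂ ▸ hcard) (hd₃ ▸ hcard)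
    fun x hx y => by
      rw [← sum_mul_pullbackWedgeSum h₁ h₂ h₃ c x y, hΩ]
      exact hc x hx y
  exact hc0 (funext fun i => show c i = 0 from match i with
    | 0 => by linear_combination (h₁₃ + h₁₂ - h₂₃) / 2
    | 1 => by linear_combination (h₂₃ + h₁₂ - h₁₃) / 2
    | 2 => by linear_combination (h₂₃ + h₁₃ - h₁₂) / 2)

/-- Lemma 1.12 (lepourcurvedec): let `g ≥ 13` and let `V₁, V₂, V₃` be vector spaces of
dimension `2g` over a field of characteristic zero, each equipped with a nondegenerate
alternating bilinear form `ωᵢ`. Denoting by `ω̃ᵢ` the pullback of `ωᵢ` to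
`V = V₁ × V₂ × V₃`, there do not exist alternating bilinear forms `B'`, `B''` on `V`
with `ω̃₁∧ω̃₂ + ω̃₂∧ω̃₃ + ω̃₁∧ω̃₃ = B'∧B''` in `⋀⁴V*`. -/
theorem no_wedge_factorization_of_sum
    {K V₁ V₂ V₃ : Type*} [Field K] [CharZero K]
    [AddCommGroup V₁] [Module K V₁] [FiniteDimensional K V₁]
    [AddCommGroup V₂] [Module K V₂] [FiniteDimensional K V₂]
    [AddCommGroup V₃] [Module K V₃] [FiniteDimensional K V₃]
    (g : ℕ) (hg : 13 ≤ g)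
    (hd₁ : Module.finrank K V₁ = 2 * g)
    (hd₂ : Module.finrank K V₂ = 2 * g)
    (hd₃ : Module.finrank K V₃ = 2 * g)
    (ω₁ : LinearMap.BilinForm K V₁) (ω₂ : LinearMap.BilinForm K V₂)
    (ω₃ : LinearMap.BilinForm K V₃)
    (hAlt₁ : LinearMap.IsAlt ω₁) (hAlt₂ : LinearMap.IsAlt ω₂)
    (hAlt₃ : LinearMap.IsAlt ω₃)
    (hnd₁ : ∀ v : V₁, (∀ w : V₁, ω₁ v w = 0) → v = 0)
    (hnd₂ : ∀ v : V₂, (∀ w : V₂, ω₂ v w = 0) → v = 0)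
    (hnd₃ : ∀ v : V₃, (∀ w : V₃, ω₃ v w = 0) → v = 0) :
    ¬ ∃ B' B'' : LinearMap.BilinForm K (V₁ × V₂ × V₃),
        LinearMap.IsAlt B' ∧ LinearMap.IsAlt B'' ∧
        ∀ x₁ x₂ x₃ x₄ : V₁ × V₂ × V₃,
          wedgeProd (fun u w => ω₁ u.1 w.1) (fun u w => ω₂ u.2.1 w.2.1) x₁ x₂ x₃ x₄
          + wedgeProd (fun u w => ω₂ u.2.1 w.2.1) (fun u w => ω₃ u.2.2 w.2.2) x₁ x₂ x₃ x₄
          + wedgeProd (fun u w => ω₁ u.1 w.1) (fun u w => ω₃ u.2.2 w.2.2) x₁ x₂ x₃ x₄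
          = wedgeProd (fun u w => B' u w) (fun u w => B'' u w) x₁ x₂ x₃ x₄ :=
  no_wedge_factorization_of_sum_general g hg hd₁ hd₂ hd₃ ω₁ ω₂ ω₃ hnd₁ hnd₂ hnd₃
end

section
/- Let V₁, V₂, V₃ be finite-dimensional complex vector spaces, each of dimension at least 2, equipped with nondegenerate quadratic forms q₁, q₂, q₃ respectively, and let λ₁, λ₂, λ₃ be nonzero complex numbers. Define F on V₁ × V₂ × V₃ by F(v₁,v₂,v₃) = λ₁q₂(v₂)q₃(v₃) + λ₂q₁(v₁)q₃(v₃) + λ₃q₁(v₁)q₂(v₂). Then there do not exist quadratic forms Q and Q' on V₁ × V₂ × V₃ with F(v) = Q(v)·Q'(v) for all v ∈ V₁ × V₂ × V₃. -/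
/-- Coefficient extraction for a one-variable quartic vanishing identically. -/
lemma quartic_coeffs {c0 c1 c2 c3 c4 : ℂ}
    (h : ∀ x : ℂ, c4 * x ^ 4 + c3 * x ^ 3 + c2 * x ^ 2 + c1 * x + c0 = 0) :
    c4 = 0 ∧ c3 = 0 ∧ c2 = 0 ∧ c1 = 0 ∧ c0 = 0 := by
  have h0 := h 0
  have h1 := h 1
  have hm1 := h (-1)
  have h2 := h 2
  have hm2 := h (-2)
  refine ⟨?_, ?_, ?_, ?_, ?_⟩
  · linear_combination (1/24 : ℂ) * h2 + (1/24 : ℂ) * hm2 - (1/6 : ℂ) * h1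
      - (1/6 : ℂ) * hm1 + (1/4 : ℂ) * h0
  · linear_combination (1/12 : ℂ) * h2 - (1/12 : ℂ) * hm2 - (1/6 : ℂ) * h1
      + (1/6 : ℂ) * hm1
  · linear_combination (2/3 : ℂ) * h1 + (2/3 : ℂ) * hm1 - (1/24 : ℂ) * h2
      - (1/24 : ℂ) * hm2 - (5/4 : ℂ) * h0
  · linear_combination (2/3 : ℂ) * h1 - (2/3 : ℂ) * hm1 - (1/12 : ℂ) * h2
      + (1/12 : ℂ) * hm2
  · linear_combination h0

section caseanalysis

variable (a b c d e f a' b' c' d' e' f' l₁ l₂ l₃ : ℂ)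

/-- Case `a = a' = b = 0` of the coefficient analysis. -/
lemma nf_core
    (hl₁ : l₁ ≠ 0) (hl₂ : l₂ ≠ 0) (hl₃ : l₃ ≠ 0)
    (A2 : b * b' = 0) (A3 : c * c' = 0)
    (S1 : a * d' + a' * d = 0) (S2 : b * d' + b' * d = 0)
    (S3 : a * b' + a' * b + d * d' = l₃)
    (S4 : a * e' + a' * e = 0) (S5 : c * e' + c' * e = 0)
    (S6 : a * c' + a' * c + e * e' = l₂)
    (S7 : b * f' + b' * f = 0) (S8 : c * f' + c' * f = 0)
    (S9 : b * c' + b' * c + f * f' = l₁)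
    (T1 : a * f' + a' * f + d * e' + d' * e = 0)
    (T2 : b * e' + b' * e + d * f' + d' * f = 0)
    (T3 : c * d' + c' * d + e * f' + e' * f = 0)
    (ha : a = 0) (ha' : a' = 0) (hb : b = 0) : False := by
  have hdd : d * d' = l₃ := by linear_combination S3 - b' * ha - b * ha'
  have hd : d ≠ 0 := left_ne_zero_of_mul (hdd ▸ hl₃)
  have hd' : d' ≠ 0 := right_ne_zero_of_mul (hdd ▸ hl₃)
  have hee : e * e' = l₂ := by linear_combination S6 - c' * ha - c * ha'
  have he : e ≠ 0 := left_ne_zero_of_mul (hee ▸ hl₂)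
  have hb' : b' = 0 := by
    have h1 : b' * d = 0 := by linear_combination S2 - d' * hb
    exact (mul_eq_zero.mp h1).resolve_right hd
  have hff : f * f' = l₁ := by linear_combination S9 - c' * hb - c * hb'
  have hf : f ≠ 0 := left_ne_zero_of_mul (hff ▸ hl₁)
  have hT1 : d * e' + d' * e = 0 := by linear_combination T1 - f' * ha - f * ha'
  have hT2 : d * f' + d' * f = 0 := by linear_combination T2 - e' * hb - e * hb'
  have h1 : e * (c' * d - c * d') = 0 := by linear_combination d * S5 - c * hT1
  have hcd0 : c' * d - c * d' = 0 := (mul_eq_zero.mp h1).resolve_left he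
  have h3 : d * d' * (c * d - e * f) = 0 := by
    linear_combination (d ^ 2 / 2) * T3 - (e * d / 2) * hT2 - (f * d / 2) * hT1
      - (d ^ 2 / 2) * hcd0
  have h4 : c * d = e * f := by
    have h5 := (mul_eq_zero.mp h3).resolve_left (mul_ne_zero hd hd')
    linear_combination h5
  have hc : c ≠ 0 := by
    intro hc0
    exact (mul_ne_zero he hf) (by linear_combination - h4 + d * hc0)
  have hc' : c' = 0 := (mul_eq_zero.mp A3).resolve_left hc
  have h6 : c * d' = 0 := by linear_combination - hcd0 + d * hc'
  exact (mul_ne_zero hc hd') h6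

/-- Case `a = a' = 0` of the coefficient analysis. -/
lemma nf_mid
    (hl₁ : l₁ ≠ 0) (hl₂ : l₂ ≠ 0) (hl₃ : l₃ ≠ 0)
    (A2 : b * b' = 0) (A3 : c * c' = 0)
    (S1 : a * d' + a' * d = 0) (S2 : b * d' + b' * d = 0)
    (S3 : a * b' + a' * b + d * d' = l₃)
    (S4 : a * e' + a' * e = 0) (S5 : c * e' + c' * e = 0)
    (S6 : a * c' + a' * c + e * e' = l₂)
    (S7 : b * f' + b' * f = 0) (S8 : c * f' + c' * f = 0)
    (S9 : b * c' + b' * c + f * f' = l₁)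
    (T1 : a * f' + a' * f + d * e' + d' * e = 0)
    (T2 : b * e' + b' * e + d * f' + d' * f = 0)
    (T3 : c * d' + c' * d + e * f' + e' * f = 0)
    (ha : a = 0) (ha' : a' = 0) : False := by
  rcases mul_eq_zero.mp A2 with hb | hb'
  · exact nf_core a b c d e f a' b' c' d' e' f' l₁ l₂ l₃ hl₁ hl₂ hl₃ A2 A3 S1 S2 S3 S4 S5
      S6 S7 S8 S9 T1 T2 T3 ha ha' hb
  · exact nf_core a' b' c' d' e' f' a b c d e f l₁ l₂ l₃ hl₁ hl₂ hl₃
      (by linear_combination A2) (by linear_combination A3)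
      (by linear_combination S1) (by linear_combination S2) (by linear_combination S3)
      (by linear_combination S4) (by linear_combination S5) (by linear_combination S6)
      (by linear_combination S7) (by linear_combination S8) (by linear_combination S9)
      (by linear_combination T1) (by linear_combination T2) (by linear_combination T3)
      ha' ha hb'

/-- Case `a = 0` of the coefficient analysis. -/
lemma nf_top
    (hl₁ : l₁ ≠ 0) (hl₂ : l₂ ≠ 0) (hl₃ : l₃ ≠ 0)
    (A2 : b * b' = 0) (A3 : c * c' = 0)
    (S1 : a * d' + a' * d = 0) (S2 : b * d' + b' * d = 0)
    (S3 : a * b' + a' * b + d * d' = l₃)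
    (S4 : a * e' + a' * e = 0) (S5 : c * e' + c' * e = 0)
    (S6 : a * c' + a' * c + e * e' = l₂)
    (S7 : b * f' + b' * f = 0) (S8 : c * f' + c' * f = 0)
    (S9 : b * c' + b' * c + f * f' = l₁)
    (T1 : a * f' + a' * f + d * e' + d' * e = 0)
    (T2 : b * e' + b' * e + d * f' + d' * f = 0)
    (T3 : c * d' + c' * d + e * f' + e' * f = 0)
    (ha : a = 0) : False := by
  by_cases ha' : a' = 0
  · exact nf_mid a b c d e f a' b' c' d' e' f' l₁ l₂ l₃ hl₁ hl₂ hl₃ A2 A3 S1 S2 S3 S4 S5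
      S6 S7 S8 S9 T1 T2 T3 ha ha'
  · have hd : d = 0 := by
      have h1 : a' * d = 0 := by linear_combination S1 - d' * ha
      exact (mul_eq_zero.mp h1).resolve_left ha'
    have he : e = 0 := by
      have h1 : a' * e = 0 := by linear_combination S4 - e' * ha
      exact (mul_eq_zero.mp h1).resolve_left ha'
    have hab : a' * b = l₃ := by linear_combination S3 - b' * ha - d' * hd
    have hb : b ≠ 0 := right_ne_zero_of_mul (hab ▸ hl₃)
    have hb' : b' = 0 := (mul_eq_zero.mp A2).resolve_left hb
    have hac : a' * c = l₂ := by linear_combination S6 - c' * ha - e' * he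
    have hc : c ≠ 0 := right_ne_zero_of_mul (hac ▸ hl₂)
    have hc' : c' = 0 := (mul_eq_zero.mp A3).resolve_left hc
    have hff : f * f' = l₁ := by linear_combination S9 - b * hc' - c * hb'
    have hf : f ≠ 0 := left_ne_zero_of_mul (hff ▸ hl₁)
    have h1 : a' * f = 0 := by linear_combination T1 - f' * ha - e' * hd - d' * he
    exact hf ((mul_eq_zero.mp h1).resolve_left ha')

/-- The scalar version: the quartic `l₁ y²z² + l₂ x²z² + l₃ x²y²` is not a product
of two quadratic forms in `x, y, z`. -/
lemma nf_scalar
    (hl₁ : l₁ ≠ 0) (hl₂ : l₂ ≠ 0) (hl₃ : l₃ ≠ 0)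
    (h : ∀ x y z : ℂ,
      l₁ * (y ^ 2 * z ^ 2) + l₂ * (x ^ 2 * z ^ 2) + l₃ * (x ^ 2 * y ^ 2)
        = (a * x ^ 2 + b * y ^ 2 + c * z ^ 2 + d * (x * y) + e * (x * z) + f * (y * z))
          * (a' * x ^ 2 + b' * y ^ 2 + c' * z ^ 2 + d' * (x * y) + e' * (x * z)
            + f' * (y * z))) : False := by
  -- extract coefficients in x, for each fixed (y, z)
  have key : ∀ y z : ℂ,
      a * a' = 0
      ∧ a * (d' * y + e' * z) + a' * (d * y + e * z) = 0
      ∧ a * (b' * y ^ 2 + c' * z ^ 2 + f' * (y * z))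
          + a' * (b * y ^ 2 + c * z ^ 2 + f * (y * z))
          + (d * y + e * z) * (d' * y + e' * z) - l₂ * z ^ 2 - l₃ * y ^ 2 = 0
      ∧ (d * y + e * z) * (b' * y ^ 2 + c' * z ^ 2 + f' * (y * z))
          + (d' * y + e' * z) * (b * y ^ 2 + c * z ^ 2 + f * (y * z)) = 0
      ∧ (b * y ^ 2 + c * z ^ 2 + f * (y * z)) * (b' * y ^ 2 + c' * z ^ 2 + f' * (y * z))
          - l₁ * (y ^ 2 * z ^ 2) = 0 := by
    intro y z
    exact quartic_coeffs (fun x => by linear_combination - h x y z)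
  have A1 : a * a' = 0 := (key 0 0).1
  have S1 : a * d' + a' * d = 0 := by linear_combination (key 1 0).2.1
  have S4 : a * e' + a' * e = 0 := by linear_combination (key 0 1).2.1
  have S3 : a * b' + a' * b + d * d' = l₃ := by linear_combination (key 1 0).2.2.1
  have S6 : a * c' + a' * c + e * e' = l₂ := by linear_combination (key 0 1).2.2.1
  have T1 : a * f' + a' * f + d * e' + d' * e = 0 := by
    linear_combination (key 1 1).2.2.1 - (key 1 0).2.2.1 - (key 0 1).2.2.1
  have S2 : b * d' + b' * d = 0 := by linear_combination (key 1 0).2.2.2.1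
  have S5 : c * e' + c' * e = 0 := by linear_combination (key 0 1).2.2.2.1
  have T2 : b * e' + b' * e + d * f' + d' * f = 0 := by
    linear_combination (1/2 : ℂ) * (key 1 1).2.2.2.1 - (1/2 : ℂ) * (key 1 (-1)).2.2.2.1
      - (key 0 1).2.2.2.1
  have T3 : c * d' + c' * d + e * f' + e' * f = 0 := by
    linear_combination (1/2 : ℂ) * (key 1 1).2.2.2.1 + (1/2 : ℂ) * (key 1 (-1)).2.2.2.1
      - (key 1 0).2.2.2.1
  -- extract coefficients in y from the constant (in x) coefficient
  have key2 : ∀ z : ℂ,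
      b * b' = 0
      ∧ (b * f' + b' * f) * z = 0
      ∧ (b * c' + b' * c + f * f' - l₁) * z ^ 2 = 0
      ∧ (c * f' + c' * f) * z ^ 3 = 0
      ∧ c * c' * z ^ 4 = 0 := by
    intro z
    exact quartic_coeffs (fun y => by linear_combination (key y z).2.2.2.2)
  have A2 : b * b' = 0 := (key2 1).1
  have S7 : b * f' + b' * f = 0 := by linear_combination (key2 1).2.1
  have S9 : b * c' + b' * c + f * f' = l₁ := by linear_combination (key2 1).2.2.1
  have S8 : c * f' + c' * f = 0 := by linear_combination (key2 1).2.2.2.1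
  have A3 : c * c' = 0 := by linear_combination (key2 1).2.2.2.2
  rcases mul_eq_zero.mp A1 with ha | ha'
  · exact nf_top a b c d e f a' b' c' d' e' f' l₁ l₂ l₃ hl₁ hl₂ hl₃ A2 A3 S1 S2 S3 S4 S5
      S6 S7 S8 S9 T1 T2 T3 ha
  · exact nf_top a' b' c' d' e' f' a b c d e f l₁ l₂ l₃ hl₁ hl₂ hl₃
      (by linear_combination A2) (by linear_combination A3)
      (by linear_combination S1) (by linear_combination S2) (by linear_combination S3)
      (by linear_combination S4) (by linear_combination S5) (by linear_combination S6)
      (by linear_combination S7) (by linear_combination S8) (by linear_combination S9)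
      (by linear_combination T1) (by linear_combination T2) (by linear_combination T3)
      ha'

end caseanalysis

/-- A nondegenerate quadratic form on a positive-dimensional complex space admits an
anisotropic vector. -/
lemma exists_aniso {V : Type*} [AddCommGroup V] [Module ℂ V] [FiniteDimensional ℂ V]
    (hd : 2 ≤ Module.finrank ℂ V) (q : QuadraticForm ℂ V)
    (hnd : ∀ v : V, (∀ w : V, QuadraticMap.polar (⇑q) v w = 0) → v = 0) :
    ∃ e : V, q e ≠ 0 := by
  by_contra hq
  push_neg at hq
  have : Nontrivial V := (Module.finrank_pos_iff (R := ℂ)).mp (by omega)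
  obtain ⟨v, hv⟩ := exists_ne (0 : V)
  exact hv (hnd v fun w => by simp [QuadraticMap.polar, hq])

/-- Expansion of a quadratic form on a three-parameter family. -/
lemma quad_expand {M : Type*} [AddCommGroup M] [Module ℂ M] (R : QuadraticForm ℂ M)
    (x y z : ℂ) (u v w : M) :
    R (x • u + y • v + z • w)
      = x ^ 2 * R u + y ^ 2 * R v + z ^ 2 * R w
        + x * y * QuadraticMap.polar (⇑R) u v + x * z * QuadraticMap.polar (⇑R) u w
        + y * z * QuadraticMap.polar (⇑R) v w := by
  rw [QuadraticMap.map_add (⇑R) (x • u + y • v) (z • w),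
    QuadraticMap.map_add (⇑R) (x • u) (y • v),
    QuadraticMap.polar_add_left, QuadraticMap.polar_smul_left, QuadraticMap.polar_smul_left,
    QuadraticMap.polar_smul_right, QuadraticMap.polar_smul_right, QuadraticMap.polar_smul_right,
    QuadraticMap.polar_smul_left, QuadraticMap.map_smul, QuadraticMap.map_smul,
    QuadraticMap.map_smul]
  simp only [smul_eq_mul]
  ring

/-- Key algebraic step in Theorem 1.6: if `V₁, V₂, V₃` are complex vector spaces of
dimension at least 2 with nondegenerate quadratic forms `q₁, q₂, q₃` and
`λ₁, λ₂, λ₃` are nonzero complex numbers, then the quartic form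
`F(v₁,v₂,v₃) = λ₁q₂(v₂)q₃(v₃) + λ₂q₁(v₁)q₃(v₃) + λ₃q₁(v₁)q₂(v₂)` on `V₁ × V₂ × V₃`
is not a product of two quadratic forms. -/
theorem no_quadratic_factorization
    {V₁ V₂ V₃ : Type*}
    [AddCommGroup V₁] [Module ℂ V₁] [FiniteDimensional ℂ V₁]
    [AddCommGroup V₂] [Module ℂ V₂] [FiniteDimensional ℂ V₂]
    [AddCommGroup V₃] [Module ℂ V₃] [FiniteDimensional ℂ V₃]
    (hd₁ : 2 ≤ Module.finrank ℂ V₁) (hd₂ : 2 ≤ Module.finrank ℂ V₂)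
    (hd₃ : 2 ≤ Module.finrank ℂ V₃)
    (q₁ : QuadraticForm ℂ V₁) (q₂ : QuadraticForm ℂ V₂) (q₃ : QuadraticForm ℂ V₃)
    (hnd₁ : ∀ v : V₁, (∀ w : V₁, QuadraticMap.polar (⇑q₁) v w = 0) → v = 0)
    (hnd₂ : ∀ v : V₂, (∀ w : V₂, QuadraticMap.polar (⇑q₂) v w = 0) → v = 0)
    (hnd₃ : ∀ v : V₃, (∀ w : V₃, QuadraticMap.polar (⇑q₃) v w = 0) → v = 0)
    (lam₁ lam₂ lam₃ : ℂ) (hlam₁ : lam₁ ≠ 0) (hlam₂ : lam₂ ≠ 0) (hlam₃ : lam₃ ≠ 0) :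
    ¬ ∃ Q Q' : QuadraticForm ℂ (V₁ × V₂ × V₃),
        ∀ v : V₁ × V₂ × V₃,
          lam₁ * q₂ v.2.1 * q₃ v.2.2 + lam₂ * q₁ v.1 * q₃ v.2.2
            + lam₃ * q₁ v.1 * q₂ v.2.1 = Q v * Q' v := by
  rintro ⟨Q, Q', h⟩
  obtain ⟨e₁, he₁⟩ := exists_aniso hd₁ q₁ hnd₁
  obtain ⟨e₂, he₂⟩ := exists_aniso hd₂ q₂ hnd₂
  obtain ⟨e₃, he₃⟩ := exists_aniso hd₃ q₃ hnd₃
  set u₁ : V₁ × V₂ × V₃ := (e₁, 0, 0) with hu₁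
  set u₂ : V₁ × V₂ × V₃ := (0, e₂, 0) with hu₂
  set u₃ : V₁ × V₂ × V₃ := (0, 0, e₃) with hu₃
  refine nf_scalar (Q u₁) (Q u₂) (Q u₃)
    (QuadraticMap.polar (⇑Q) u₁ u₂) (QuadraticMap.polar (⇑Q) u₁ u₃)
    (QuadraticMap.polar (⇑Q) u₂ u₃)
    (Q' u₁) (Q' u₂) (Q' u₃)
    (QuadraticMap.polar (⇑Q') u₁ u₂) (QuadraticMap.polar (⇑Q') u₁ u₃)
    (QuadraticMap.polar (⇑Q') u₂ u₃)
    (lam₁ * q₂ e₂ * q₃ e₃) (lam₂ * q₁ e₁ * q₃ e₃) (lam₃ * q₁ e₁ * q₂ e₂)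
    (mul_ne_zero (mul_ne_zero hlam₁ he₂) he₃)
    (mul_ne_zero (mul_ne_zero hlam₂ he₁) he₃)
    (mul_ne_zero (mul_ne_zero hlam₃ he₁) he₂) ?_
  intro x y z
  have hv : (x • e₁, y • e₂, z • e₃) = x • u₁ + y • u₂ + z • u₃ := by
    rw [hu₁, hu₂, hu₃]
    simp [Prod.ext_iff]
  have h0 := h (x • e₁, y • e₂, z • e₃)
  dsimp only at h0
  rw [hv, quad_expand Q, quad_expand Q', QuadraticMap.map_smul, QuadraticMap.map_smul,
    QuadraticMap.map_smul] at h0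
  simp only [smul_eq_mul] at h0
  linear_combination h0
end

section
/- Let K be a field of characteristic zero. Let V₁ and V₂ be K-vector spaces of dimensions 2g₁ ≥ 2 and 2g₂ ≥ 2, equipped with nondegenerate alternating bilinear forms ω₁ and ω₂ respectively, and let V₃ be any finite-dimensional K-vector space. Let B be an alternating bilinear form on V = V₁ × V₂ × V₃. Suppose that for every Lagrangian subspace W₁ ⊆ V₁ and every Lagrangian subspace W₂ ⊆ V₂, the form B vanishes identically on the subspace W₁ × W₂ × V₃ (i.e., B(u,w) = 0 for all u, w ∈ W₁ × W₂ × V₃). Then every vector of the form (0,0,v₃) lies in the radical of B, i.e., B((0,0,v₃), w) = 0 for all v₃ ∈ V₃ and all w ∈ V. -/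
/-!
An isotropic subspace that is maximal among isotropic subspaces equals its own orthogonal: a
vector orthogonal to it but outside it would span, together with it, a larger isotropic
subspace. By nondegeneracy such a subspace has half the dimension, i.e. it is Lagrangian.
Every vector `x` spans an isotropic line, which lies in a maximal isotropic subspace, so each
component of any `w` lies in a Lagrangian subspace, and `B (0, 0, v₃) w = 0` is an instance of
the hypothesis.
-/

open Module Submodule LinearMap.BilinForm

namespace LinearMap.BilinForm

variable {K V : Type*} [Field K] [AddCommGroup V] [Module K V] {ω : LinearMap.BilinForm K V}

lemma sup_span_singleton_le_orthogonal (hAlt : ω.IsAlt) {W : Submodule K V}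
    (hW : W ≤ ω.orthogonal W) {v : V} (hv : v ∈ ω.orthogonal W) :
    W ⊔ span K {v} ≤ ω.orthogonal (W ⊔ span K {v}) := by
  rintro _ hx _ hy
  obtain ⟨a, ha, _, hb, rfl⟩ := mem_sup.mp hx
  obtain ⟨c, hc, _, hd, rfl⟩ := mem_sup.mp hy
  obtain ⟨s, rfl⟩ := mem_span_singleton.mp hb
  obtain ⟨t, rfl⟩ := mem_span_singleton.mp hd
  have hca : ω c a = 0 := hW ha c hc
  have hcv : ω c v = 0 := hv c hc
  have hva : ω v a = 0 := hAlt.isRefl a v (hv a ha)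
  simp [hca, hcv, hva, hAlt v]

lemma orthogonal_eq_of_maximal (hAlt : ω.IsAlt) {L : Submodule K V}
    (hL : Maximal (fun W ↦ W ≤ ω.orthogonal W) L) : ω.orthogonal L = L := by
  refine le_antisymm (fun v hv ↦ ?_) hL.prop
  have hle : L ⊔ span K {v} ≤ L :=
    hL.le_of_ge (sup_span_singleton_le_orthogonal hAlt hL.prop hv) le_sup_left
  exact hle (mem_sup_right (mem_span_singleton_self v))

lemma exists_orthogonal_eq_ge [FiniteDimensional K V] (hAlt : ω.IsAlt) {W : Submodule K V}
    (hW : W ≤ ω.orthogonal W) : ∃ L ≥ W, ω.orthogonal L = L := by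
  obtain ⟨L, hWL, hL⟩ := exists_maximal_ge_of_wellFoundedGT (fun W ↦ W ≤ ω.orthogonal W) W hW
  exact ⟨L, hWL, orthogonal_eq_of_maximal hAlt hL⟩

lemma exists_orthogonal_eq_mem [FiniteDimensional K V] (hAlt : ω.IsAlt) (x : V) :
    ∃ L : Submodule K V, x ∈ L ∧ ω.orthogonal L = L := by
  have hx : span K {x} ≤ ω.orthogonal (span K {x}) := by
    rintro _ hu _ hv
    obtain ⟨s, rfl⟩ := mem_span_singleton.mp hu
    obtain ⟨t, rfl⟩ := mem_span_singleton.mp hv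
    simp [hAlt x]
  obtain ⟨L, hxL, hL⟩ := exists_orthogonal_eq_ge hAlt hx
  exact ⟨L, hxL (mem_span_singleton_self x), hL⟩

lemma two_mul_finrank_eq_of_orthogonal_eq [FiniteDimensional K V] (hnd : ω.Nondegenerate)
    {L : Submodule K V} (hL : ω.orthogonal L = L) : 2 * finrank K L = finrank K V := by
  have h := finrank_orthogonal hnd L
  rw [hL] at h
  have := L.finrank_le
  omega

lemma exists_lagrangian_mem [FiniteDimensional K V] {g : ℕ} (hd : finrank K V = 2 * g)
    (hAlt : ω.IsAlt) (hnd : ω.SeparatingLeft) (x : V) :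
    ∃ L : Submodule K V, x ∈ L ∧ finrank K L = g ∧ ∀ u ∈ L, ∀ v ∈ L, ω u v = 0 := by
  obtain ⟨L, hxL, hL⟩ := exists_orthogonal_eq_mem hAlt x
  have hdim := two_mul_finrank_eq_of_orthogonal_eq
    (hAlt.isRefl.nondegenerate_iff_separatingLeft.mpr hnd) hL
  exact ⟨L, hxL, by omega, fun u hu v hv ↦ hL.ge hv u hu⟩

end LinearMap.BilinForm

theorem third_factor_in_radical_general
    {K V₁ V₂ V₃ : Type*} [Field K]
    [AddCommGroup V₁] [Module K V₁] [FiniteDimensional K V₁]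
    [AddCommGroup V₂] [Module K V₂] [FiniteDimensional K V₂]
    [AddCommGroup V₃] [Module K V₃]
    (g₁ g₂ : ℕ)
    (hd₁ : Module.finrank K V₁ = 2 * g₁) (hd₂ : Module.finrank K V₂ = 2 * g₂)
    (ω₁ : LinearMap.BilinForm K V₁) (ω₂ : LinearMap.BilinForm K V₂)
    (hAlt₁ : LinearMap.IsAlt ω₁) (hAlt₂ : LinearMap.IsAlt ω₂)
    (hnd₁ : ∀ v : V₁, (∀ w : V₁, ω₁ v w = 0) → v = 0)
    (hnd₂ : ∀ v : V₂, (∀ w : V₂, ω₂ v w = 0) → v = 0)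
    (B : LinearMap.BilinForm K (V₁ × V₂ × V₃))
    (hvan : ∀ (W₁ : Submodule K V₁) (W₂ : Submodule K V₂),
      Module.finrank K W₁ = g₁ → (∀ u ∈ W₁, ∀ v ∈ W₁, ω₁ u v = 0) →
      Module.finrank K W₂ = g₂ → (∀ u ∈ W₂, ∀ v ∈ W₂, ω₂ u v = 0) →
      ∀ u w : V₁ × V₂ × V₃, u.1 ∈ W₁ → u.2.1 ∈ W₂ → w.1 ∈ W₁ → w.2.1 ∈ W₂ →
        B u w = 0) :
    ∀ (v₃ : V₃) (w : V₁ × V₂ × V₃), B (0, 0, v₃) w = 0 := by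
  intro v₃ w
  obtain ⟨W₁, hw₁, hdim₁, hiso₁⟩ := exists_lagrangian_mem hd₁ hAlt₁ hnd₁ w.1
  obtain ⟨W₂, hw₂, hdim₂, hiso₂⟩ := exists_lagrangian_mem hd₂ hAlt₂ hnd₂ w.2.1
  exact hvan W₁ W₂ hdim₁ hiso₁ hdim₂ hiso₂ (0, 0, v₃) w W₁.zero_mem W₂.zero_mem hw₁ hw₂

/-- Case (1) in the proof of Lemma 1.12: let `(V₁, ω₁)` and `(V₂, ω₂)` be symplectic
vector spaces of dimensions `2g₁` and `2g₂` over a field of characteristic zero, `V₃`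
any finite-dimensional vector space, and `B` an alternating bilinear form on
`V = V₁ × V₂ × V₃`. If `B` vanishes identically on `W₁ × W₂ × V₃` for every pair of
Lagrangian subspaces `W₁ ⊆ V₁`, `W₂ ⊆ V₂`, then every vector `(0,0,v₃)` lies in the
radical of `B`. -/
theorem third_factor_in_radical
    {K V₁ V₂ V₃ : Type*} [Field K] [CharZero K]
    [AddCommGroup V₁] [Module K V₁] [FiniteDimensional K V₁]
    [AddCommGroup V₂] [Module K V₂] [FiniteDimensional K V₂]
    [AddCommGroup V₃] [Module K V₃] [FiniteDimensional K V₃]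
    (g₁ g₂ : ℕ) (hg₁ : 1 ≤ g₁) (hg₂ : 1 ≤ g₂)
    (hd₁ : Module.finrank K V₁ = 2 * g₁) (hd₂ : Module.finrank K V₂ = 2 * g₂)
    (ω₁ : LinearMap.BilinForm K V₁) (ω₂ : LinearMap.BilinForm K V₂)
    (hAlt₁ : LinearMap.IsAlt ω₁) (hAlt₂ : LinearMap.IsAlt ω₂)
    (hnd₁ : ∀ v : V₁, (∀ w : V₁, ω₁ v w = 0) → v = 0)
    (hnd₂ : ∀ v : V₂, (∀ w : V₂, ω₂ v w = 0) → v = 0)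
    (B : LinearMap.BilinForm K (V₁ × V₂ × V₃)) (hAltB : LinearMap.IsAlt B)
    (hvan : ∀ (W₁ : Submodule K V₁) (W₂ : Submodule K V₂),
      Module.finrank K W₁ = g₁ → (∀ u ∈ W₁, ∀ v ∈ W₁, ω₁ u v = 0) →
      Module.finrank K W₂ = g₂ → (∀ u ∈ W₂, ∀ v ∈ W₂, ω₂ u v = 0) →
      ∀ u w : V₁ × V₂ × V₃, u.1 ∈ W₁ → u.2.1 ∈ W₂ → w.1 ∈ W₁ → w.2.1 ∈ W₂ →
        B u w = 0) :
    ∀ (v₃ : V₃) (w : V₁ × V₂ × V₃), B (0, 0, v₃) w = 0 :=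
  third_factor_in_radical_general g₁ g₂ hd₁ hd₂ ω₁ ω₂ hAlt₁ hAlt₂ hnd₁ hnd₂ B hvan
end

section
/- Let K be a field of characteristic zero and let V₁, V₂, V₃ be finite-dimensional K-vector spaces, each of positive even dimension, equipped with nondegenerate alternating bilinear forms ω₁, ω₂, ω₃ respectively. Let V = V₁ × V₂ × V₃, let ω̃₁, ω̃₂, ω̃₃ denote the pullbacks of ω₁, ω₂, ω₃ to V via the projections, and let Ω = ω̃₁∧ω̃₂ + ω̃₂∧ω̃₃ + ω̃₁∧ω̃₃, an alternating 4-linear form on V. Then Ω has no nontrivial kernel: for every nonzero v ∈ V there exist x, y, z ∈ V with Ω(v,x,y,z) ≠ 0. -/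
/-- Concluding claim in the proof of Lemma 1.12: if `V₁, V₂, V₃` are vector spaces of
positive even dimension over a field of characteristic zero with nondegenerate
alternating bilinear forms `ω₁, ω₂, ω₃`, and `ω̃ᵢ` denote their pullbacks to
`V = V₁ × V₂ × V₃`, then the alternating 4-linear form
`Ω = ω̃₁∧ω̃₂ + ω̃₂∧ω̃₃ + ω̃₁∧ω̃₃` has no nontrivial kernel: for every nonzero `v ∈ V`
there exist `x, y, z` with `Ω(v,x,y,z) ≠ 0`. -/
theorem sum_of_wedges_no_kernel
    {K V₁ V₂ V₃ : Type*} [Field K] [CharZero K]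
    [AddCommGroup V₁] [Module K V₁] [FiniteDimensional K V₁]
    [AddCommGroup V₂] [Module K V₂] [FiniteDimensional K V₂]
    [AddCommGroup V₃] [Module K V₃] [FiniteDimensional K V₃]
    (hd₁ : 0 < Module.finrank K V₁) (hd₂ : 0 < Module.finrank K V₂)
    (hd₃ : 0 < Module.finrank K V₃)
    (he₁ : Even (Module.finrank K V₁)) (he₂ : Even (Module.finrank K V₂))
    (he₃ : Even (Module.finrank K V₃))
    (ω₁ : LinearMap.BilinForm K V₁) (ω₂ : LinearMap.BilinForm K V₂)
    (ω₃ : LinearMap.BilinForm K V₃)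
    (hAlt₁ : LinearMap.IsAlt ω₁) (hAlt₂ : LinearMap.IsAlt ω₂)
    (hAlt₃ : LinearMap.IsAlt ω₃)
    (hnd₁ : ∀ v : V₁, (∀ w : V₁, ω₁ v w = 0) → v = 0)
    (hnd₂ : ∀ v : V₂, (∀ w : V₂, ω₂ v w = 0) → v = 0)
    (hnd₃ : ∀ v : V₃, (∀ w : V₃, ω₃ v w = 0) → v = 0) :
    ∀ v : V₁ × V₂ × V₃, v ≠ 0 → ∃ x y z : V₁ × V₂ × V₃,
      wedgeProd (fun u w => ω₁ u.1 w.1) (fun u w => ω₂ u.2.1 w.2.1) v x y z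
      + wedgeProd (fun u w => ω₂ u.2.1 w.2.1) (fun u w => ω₃ u.2.2 w.2.2) v x y z
      + wedgeProd (fun u w => ω₁ u.1 w.1) (fun u w => ω₃ u.2.2 w.2.2) v x y z
      ≠ 0 := by
  have pair₁ : ∃ a a' : V₁, ω₁ a a' ≠ 0 := by
    have : Nontrivial V₁ := Module.nontrivial_of_finrank_pos hd₁
    obtain ⟨a, ha⟩ := exists_ne (0 : V₁)
    obtain ⟨a', ha'⟩ := not_forall.mp (fun h => ha (hnd₁ a h))
    exact ⟨a, a', ha'⟩
  have pair₂ : ∃ a a' : V₂, ω₂ a a' ≠ 0 := by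
    have : Nontrivial V₂ := Module.nontrivial_of_finrank_pos hd₂
    obtain ⟨a, ha⟩ := exists_ne (0 : V₂)
    obtain ⟨a', ha'⟩ := not_forall.mp (fun h => ha (hnd₂ a h))
    exact ⟨a, a', ha'⟩
  rintro ⟨v₁, v₂, v₃⟩ hv
  have h : v₁ ≠ 0 ∨ v₂ ≠ 0 ∨ v₃ ≠ 0 := by
    by_contra h
    push_neg at h
    exact hv (by simp [Prod.ext_iff, h.1, h.2.1, h.2.2])
  rcases h with h | h | h
  · obtain ⟨w, hw⟩ := not_forall.mp (fun hh => h (hnd₁ _ hh))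
    obtain ⟨b, b', hb⟩ := pair₂
    refine ⟨(w, 0, 0), (0, b, 0), (0, b', 0), ?_⟩
    simpa [wedgeProd] using mul_ne_zero hw hb
  · obtain ⟨w, hw⟩ := not_forall.mp (fun hh => h (hnd₂ _ hh))
    obtain ⟨a, a', ha⟩ := pair₁
    refine ⟨(0, w, 0), (a, 0, 0), (a', 0, 0), ?_⟩
    simpa [wedgeProd] using mul_ne_zero hw ha
  · obtain ⟨w, hw⟩ := not_forall.mp (fun hh => h (hnd₃ _ hh))
    obtain ⟨a, a', ha⟩ := pair₁
    refine ⟨(0, 0, w), (a, 0, 0), (a', 0, 0), ?_⟩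
    simpa [wedgeProd] using mul_ne_zero hw ha
end

section
/- Let V be a finite-dimensional complex vector space and let a, b be alternating bilinear forms on V satisfying a∧a + a∧b + b∧b = 0 as alternating 4-linear forms on V. Then at least one of the following holds: (1) a + ((1+i√3)/2)·b = 0; (2) a + ((1−i√3)/2)·b = 0; or (3) there exists a subspace N ⊆ V with dim V − dim N ≤ 4 such that N is contained in the radical of a and in the radical of b. -/
open Complex

lemma cramer4 (c12 c13 c14 c23 c24 c34 e1 e2 e3 e4 : ℂ)
    (hPf : c12 * c34 - c13 * c24 + c14 * c23 ≠ 0)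
    (h123 : e1 * c23 - e2 * c13 + e3 * c12 = 0)
    (h124 : e1 * c24 - e2 * c14 + e4 * c12 = 0)
    (h134 : e1 * c34 - e3 * c14 + e4 * c13 = 0)
    (h234 : e2 * c34 - e3 * c24 + e4 * c23 = 0) :
    e1 = 0 ∧ e2 = 0 ∧ e3 = 0 ∧ e4 = 0 := by
  have k1 : e1 * (c12 * c34 - c13 * c24 + c14 * c23) = 0 := by
    linear_combination c14 * h123 - c13 * h124 + c12 * h134
  have k2 : e2 * (c12 * c34 - c13 * c24 + c14 * c23) = 0 := by
    linear_combination c24 * h123 - c23 * h124 + c12 * h234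
  have k3 : e3 * (c12 * c34 - c13 * c24 + c14 * c23) = 0 := by
    linear_combination c34 * h123 - c23 * h134 + c13 * h234
  have k4 : e4 * (c12 * c34 - c13 * c24 + c14 * c23) = 0 := by
    linear_combination c34 * h124 - c24 * h134 + c14 * h234
  exact ⟨(mul_eq_zero.mp k1).resolve_right hPf, (mul_eq_zero.mp k2).resolve_right hPf,
    (mul_eq_zero.mp k3).resolve_right hPf, (mul_eq_zero.mp k4).resolve_right hPf⟩

lemma pf_kill (c12 c13 c14 c23 c24 c34 P : ℂ)
    (hPf : c12 * c34 - c13 * c24 + c14 * c23 ≠ 0)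
    (h12 : P * c12 = 0) (h13 : P * c13 = 0) (h14 : P * c14 = 0) : P = 0 := by
  have k : P * (c12 * c34 - c13 * c24 + c14 * c23) = 0 := by
    linear_combination c34 * h12 - c24 * h13 + c23 * h14
  exact (mul_eq_zero.mp k).resolve_right hPf

/-- Structure lemma: if `c∧d ≡ 0` and the Pfaffian of `c` at `x₁,…,x₄` is nonzero, then
either `d ≡ 0`, or every vector `c`-orthogonal to `x₁,…,x₄` is in the radical of both. -/
lemma keyLemma {V : Type*} (c d : V → V → ℂ)
    (W : ∀ x1 x2 x3 x4 : V, wedgeProd c d x1 x2 x3 x4 = 0)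
    (x1 x2 x3 x4 : V)
    (hPf : c x1 x2 * c x3 x4 - c x1 x3 * c x2 x4 + c x1 x4 * c x2 x3 ≠ 0) :
    (∀ y z, d y z = 0) ∨
    ∀ v, c v x1 = 0 → c v x2 = 0 → c v x3 = 0 → c v x4 = 0 →
      ∀ w, c v w = 0 ∧ d v w = 0 := by
  by_cases H : ∀ v, c v x1 = 0 → c v x2 = 0 → c v x3 = 0 → c v x4 = 0 →
      ∀ w, c v w = 0 ∧ d v w = 0
  · exact Or.inr H
  push_neg at H
  obtain ⟨v, hv1, hv2, hv3, hv4, w0, hne⟩ := H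
  -- Step 1: d v xᵢ = 0
  have T123 : d v x1 * c x2 x3 - d v x2 * c x1 x3 + d v x3 * c x1 x2 = 0 := by
    have h := W v x1 x2 x3; simp only [wedgeProd] at h
    linear_combination h - d x2 x3 * hv1 + d x1 x3 * hv2 - d x1 x2 * hv3
  have T124 : d v x1 * c x2 x4 - d v x2 * c x1 x4 + d v x4 * c x1 x2 = 0 := by
    have h := W v x1 x2 x4; simp only [wedgeProd] at h
    linear_combination h - d x2 x4 * hv1 + d x1 x4 * hv2 - d x1 x2 * hv4
  have T134 : d v x1 * c x3 x4 - d v x3 * c x1 x4 + d v x4 * c x1 x3 = 0 := by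
    have h := W v x1 x3 x4; simp only [wedgeProd] at h
    linear_combination h - d x3 x4 * hv1 + d x1 x4 * hv3 - d x1 x3 * hv4
  have T234 : d v x2 * c x3 x4 - d v x3 * c x2 x4 + d v x4 * c x2 x3 = 0 := by
    have h := W v x2 x3 x4; simp only [wedgeProd] at h
    linear_combination h - d x3 x4 * hv2 + d x2 x4 * hv3 - d x2 x3 * hv4
  obtain ⟨hd1, hd2, hd3, hd4⟩ := cramer4 _ _ _ _ _ _ _ _ _ _ hPf T123 T124 T134 T234
  -- Step 2: for every w : c v w * d xᵢ xⱼ + d v w * c xᵢ xⱼ = 0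
  have E12 : ∀ w, c v w * d x1 x2 + d v w * c x1 x2 = 0 := by
    intro w; have h := W v w x1 x2; simp only [wedgeProd] at h
    linear_combination h + d w x2 * hv1 - d w x1 * hv2 + c w x2 * hd1 - c w x1 * hd2
  have E13 : ∀ w, c v w * d x1 x3 + d v w * c x1 x3 = 0 := by
    intro w; have h := W v w x1 x3; simp only [wedgeProd] at h
    linear_combination h + d w x3 * hv1 - d w x1 * hv3 + c w x3 * hd1 - c w x1 * hd3
  have E14 : ∀ w, c v w * d x1 x4 + d v w * c x1 x4 = 0 := by
    intro w; have h := W v w x1 x4; simp only [wedgeProd] at h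
    linear_combination h + d w x4 * hv1 - d w x1 * hv4 + c w x4 * hd1 - c w x1 * hd4
  have E23 : ∀ w, c v w * d x2 x3 + d v w * c x2 x3 = 0 := by
    intro w; have h := W v w x2 x3; simp only [wedgeProd] at h
    linear_combination h + d w x3 * hv2 - d w x2 * hv3 + c w x3 * hd2 - c w x2 * hd3
  have E24 : ∀ w, c v w * d x2 x4 + d v w * c x2 x4 = 0 := by
    intro w; have h := W v w x2 x4; simp only [wedgeProd] at h
    linear_combination h + d w x4 * hv2 - d w x2 * hv4 + c w x4 * hd2 - c w x2 * hd4
  have E34 : ∀ w, c v w * d x3 x4 + d v w * c x3 x4 = 0 := by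
    intro w; have h := W v w x3 x4; simp only [wedgeProd] at h
    linear_combination h + d w x4 * hv3 - d w x3 * hv4 + c w x4 * hd3 - c w x3 * hd4
  -- Step 3: B := d v w0 = 0
  have hS := W x1 x2 x3 x4; simp only [wedgeProd] at hS
  have hB : d v w0 = 0 := by
    have k : d v w0 * (2 * (c x1 x2 * c x3 x4 - c x1 x3 * c x2 x4 + c x1 x4 * c x2 x3)) = 0 := by
      linear_combination c x3 x4 * E12 w0 - c x2 x4 * E13 w0 + c x2 x3 * E14 w0
        + c x1 x2 * E34 w0 - c x1 x3 * E24 w0 + c x1 x4 * E23 w0 - c v w0 * hS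
    exact (mul_eq_zero.mp k).resolve_right (mul_ne_zero two_ne_zero hPf)
  have hA : c v w0 ≠ 0 := fun h => hne h hB
  -- Step 4: d xᵢ xⱼ = 0
  have hD12 : d x1 x2 = 0 := by
    have k := E12 w0; rw [hB] at k
    exact (mul_eq_zero.mp (by linear_combination k)).resolve_left hA
  have hD13 : d x1 x3 = 0 := by
    have k := E13 w0; rw [hB] at k
    exact (mul_eq_zero.mp (by linear_combination k)).resolve_left hA
  have hD14 : d x1 x4 = 0 := by
    have k := E14 w0; rw [hB] at k
    exact (mul_eq_zero.mp (by linear_combination k)).resolve_left hA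
  have hD23 : d x2 x3 = 0 := by
    have k := E23 w0; rw [hB] at k
    exact (mul_eq_zero.mp (by linear_combination k)).resolve_left hA
  have hD24 : d x2 x4 = 0 := by
    have k := E24 w0; rw [hB] at k
    exact (mul_eq_zero.mp (by linear_combination k)).resolve_left hA
  have hD34 : d x3 x4 = 0 := by
    have k := E34 w0; rw [hB] at k
    exact (mul_eq_zero.mp (by linear_combination k)).resolve_left hA
  -- Step 5: d v w = 0 for all w
  have hdv : ∀ w, d v w = 0 := by
    intro w
    refine pf_kill (c x1 x2) (c x1 x3) (c x1 x4) (c x2 x3) (c x2 x4) (c x3 x4) _ hPf ?_ ?_ ?_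
    · linear_combination E12 w - c v w * hD12
    · linear_combination E13 w - c v w * hD13
    · linear_combination E14 w - c v w * hD14
  -- Step 6: D-formula: c v w0 * d z t = c v z * d w0 t - c v t * d w0 z
  have hDF : ∀ z t, c v w0 * d z t = c v z * d w0 t - c v t * d w0 z := by
    intro z t
    have h := W v w0 z t; simp only [wedgeProd] at h
    linear_combination h - c z t * hB + c w0 t * hdv z - c w0 z * hdv t
  -- Step 7/8: d w0 xᵢ = 0
  have TB123 : d w0 x1 * c x2 x3 - d w0 x2 * c x1 x3 + d w0 x3 * c x1 x2 = 0 := by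
    have h := W w0 x1 x2 x3; simp only [wedgeProd] at h
    linear_combination h - c w0 x1 * hD23 + c w0 x2 * hD13 - c w0 x3 * hD12
  have TB124 : d w0 x1 * c x2 x4 - d w0 x2 * c x1 x4 + d w0 x4 * c x1 x2 = 0 := by
    have h := W w0 x1 x2 x4; simp only [wedgeProd] at h
    linear_combination h - c w0 x1 * hD24 + c w0 x2 * hD14 - c w0 x4 * hD12
  have TB134 : d w0 x1 * c x3 x4 - d w0 x3 * c x1 x4 + d w0 x4 * c x1 x3 = 0 := by
    have h := W w0 x1 x3 x4; simp only [wedgeProd] at h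
    linear_combination h - c w0 x1 * hD34 + c w0 x3 * hD14 - c w0 x4 * hD13
  have TB234 : d w0 x2 * c x3 x4 - d w0 x3 * c x2 x4 + d w0 x4 * c x2 x3 = 0 := by
    have h := W w0 x2 x3 x4; simp only [wedgeProd] at h
    linear_combination h - c w0 x2 * hD34 + c w0 x3 * hD24 - c w0 x4 * hD23
  obtain ⟨hb1, hb2, hb3, hb4⟩ := cramer4 _ _ _ _ _ _ _ _ _ _ hPf TB123 TB124 TB134 TB234
  -- Step 9: d z xᵢ = 0 for all z
  have hz1 : ∀ z, d z x1 = 0 := fun z => (mul_eq_zero.mp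
    (by linear_combination hDF z x1 + c v z * hb1 - d w0 z * hv1 :
      c v w0 * d z x1 = 0)).resolve_left hA
  have hz2 : ∀ z, d z x2 = 0 := fun z => (mul_eq_zero.mp
    (by linear_combination hDF z x2 + c v z * hb2 - d w0 z * hv2 :
      c v w0 * d z x2 = 0)).resolve_left hA
  have hz3 : ∀ z, d z x3 = 0 := fun z => (mul_eq_zero.mp
    (by linear_combination hDF z x3 + c v z * hb3 - d w0 z * hv3 :
      c v w0 * d z x3 = 0)).resolve_left hA
  have hz4 : ∀ z, d z x4 = 0 := fun z => (mul_eq_zero.mp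
    (by linear_combination hDF z x4 + c v z * hb4 - d w0 z * hv4 :
      c v w0 * d z x4 = 0)).resolve_left hA
  -- Step 10: d ≡ 0
  left
  intro y z
  refine pf_kill (c x1 x2) (c x1 x3) (c x1 x4) (c x2 x3) (c x2 x4) (c x3 x4) _ hPf ?_ ?_ ?_
  · have h := W y z x1 x2; simp only [wedgeProd] at h
    linear_combination h - c y z * hD12 + c y x1 * hz2 z - c y x2 * hz1 z
      + c z x2 * hz1 y - c z x1 * hz2 y
  · have h := W y z x1 x3; simp only [wedgeProd] at h
    linear_combination h - c y z * hD13 + c y x1 * hz3 z - c y x3 * hz1 z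
      + c z x3 * hz1 y - c z x1 * hz3 y
  · have h := W y z x1 x4; simp only [wedgeProd] at h
    linear_combination h - c y z * hD14 + c y x1 * hz4 z - c y x4 * hz1 z
      + c z x4 * hz1 y - c z x1 * hz4 y

lemma buildN {V : Type*} [AddCommGroup V] [Module ℂ V] [FiniteDimensional ℂ V]
    (a b : LinearMap.BilinForm ℂ V) (φ : Fin 4 → (V →ₗ[ℂ] ℂ))
    (h : ∀ v, (∀ i, φ i v = 0) → ∀ w, a v w = 0 ∧ b v w = 0) :
    ∃ N : Submodule ℂ V,
      Module.finrank ℂ V - Module.finrank ℂ N ≤ 4 ∧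
      ∀ v ∈ N, ∀ w : V, a v w = 0 ∧ b v w = 0 := by
  refine ⟨LinearMap.ker (LinearMap.pi φ), ?_, ?_⟩
  · have hrk := LinearMap.finrank_range_add_finrank_ker (LinearMap.pi φ)
    have hle : Module.finrank ℂ ↥(LinearMap.range (LinearMap.pi φ)) ≤
        Module.finrank ℂ (Fin 4 → ℂ) := Submodule.finrank_le _
    rw [Module.finrank_fin_fun] at hle
    omega
  · intro v hv w
    refine h v (fun i => ?_) w
    have := congrFun (LinearMap.mem_ker.mp hv) i
    simpa [LinearMap.pi_apply] using this

lemma mainAux {V : Type*} [AddCommGroup V] [Module ℂ V] [FiniteDimensional ℂ V]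
    (a b : LinearMap.BilinForm ℂ V) (ζ : ℂ) (hζ : ζ ^ 2 - ζ + 1 = 0)
    (hrel : ∀ x₁ x₂ x₃ x₄ : V,
      wedgeProd (fun u w => a u w) (fun u w => a u w) x₁ x₂ x₃ x₄
      + wedgeProd (fun u w => a u w) (fun u w => b u w) x₁ x₂ x₃ x₄
      + wedgeProd (fun u w => b u w) (fun u w => b u w) x₁ x₂ x₃ x₄ = 0) :
    a + ζ • b = 0 ∨
    a + (1 - ζ) • b = 0 ∨
    ∃ N : Submodule ℂ V,
      Module.finrank ℂ V - Module.finrank ℂ N ≤ 4 ∧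
      ∀ v ∈ N, ∀ w : V, a v w = 0 ∧ b v w = 0 := by
  have hζne : (2 : ℂ) * ζ - 1 ≠ 0 := by
    intro h
    have : ((2 : ℂ) * ζ - 1) ^ 2 = -3 := by linear_combination 4 * hζ
    rw [h] at this
    norm_num at this
  set c : V → V → ℂ := fun u w => a u w + ζ * b u w with hcdef
  set d : V → V → ℂ := fun u w => a u w + (1 - ζ) * b u w with hddef
  have WG : ∀ x1 x2 x3 x4 : V, wedgeProd c d x1 x2 x3 x4 = 0 := by
    intro x1 x2 x3 x4
    have h := hrel x1 x2 x3 x4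
    simp only [wedgeProd, hcdef, hddef] at h ⊢
    linear_combination h - 2 * (b x1 x2 * b x3 x4 - b x1 x3 * b x2 x4 + b x1 x4 * b x2 x3) * hζ
  -- from vanishing of c and d at a point, recover vanishing of a and b
  have recov : ∀ v w : V, c v w = 0 → d v w = 0 → a v w = 0 ∧ b v w = 0 := by
    intro v w h1 h2
    simp only [hcdef, hddef] at h1 h2
    have hb : b v w = 0 := by
      have k : ((2 : ℂ) * ζ - 1) * b v w = 0 := by linear_combination h1 - h2
      exact (mul_eq_zero.mp k).resolve_left hζne
    refine ⟨?_, hb⟩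
    linear_combination h1 - ζ * hb
  by_cases hc0 : ∀ x y : V, c x y = 0
  · left
    apply LinearMap.ext; intro x; apply LinearMap.ext; intro y
    have := hc0 x y
    simp only [hcdef] at this
    simpa [LinearMap.add_apply, LinearMap.smul_apply, smul_eq_mul] using this
  by_cases hd0 : ∀ x y : V, d x y = 0
  · right; left
    apply LinearMap.ext; intro x; apply LinearMap.ext; intro y
    have := hd0 x y
    simp only [hddef] at this
    simpa [LinearMap.add_apply, LinearMap.smul_apply, smul_eq_mul] using this
  right; right
  push_neg at hc0 hd0
  obtain ⟨u1, u2, hcu⟩ := hc0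
  obtain ⟨u3, u4, hdu⟩ := hd0
  by_cases hPfc : ∃ x1 x2 x3 x4 : V,
      c x1 x2 * c x3 x4 - c x1 x3 * c x2 x4 + c x1 x4 * c x2 x3 ≠ 0
  · obtain ⟨x1, x2, x3, x4, hPf⟩ := hPfc
    rcases keyLemma c d WG x1 x2 x3 x4 hPf with hzero | Hrad
    · exact absurd (hzero u3 u4) hdu
    · refine buildN a b ![(a + ζ • b).flip x1, (a + ζ • b).flip x2,
        (a + ζ • b).flip x3, (a + ζ • b).flip x4] (fun v hv w => ?_)
      have e1 := hv 0; have e2 := hv 1; have e3 := hv 2; have e4 := hv 3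
      simp only [Matrix.cons_val_zero, Matrix.cons_val_one, Matrix.head_cons,
        Matrix.cons_val_two, Matrix.tail_cons, Matrix.cons_val_three,
        LinearMap.flip_apply, LinearMap.add_apply, LinearMap.smul_apply, smul_eq_mul]
        at e1 e2 e3 e4
      obtain ⟨h1, h2⟩ := Hrad v e1 e2 e3 e4 w
      exact recov v w h1 h2
  by_cases hPfd : ∃ x1 x2 x3 x4 : V,
      d x1 x2 * d x3 x4 - d x1 x3 * d x2 x4 + d x1 x4 * d x2 x3 ≠ 0
  · obtain ⟨x1, x2, x3, x4, hPf⟩ := hPfd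
    have WG' : ∀ x1 x2 x3 x4 : V, wedgeProd d c x1 x2 x3 x4 = 0 := by
      intro y1 y2 y3 y4
      have h := WG y1 y2 y3 y4
      simp only [wedgeProd] at h ⊢
      linear_combination h
    rcases keyLemma d c WG' x1 x2 x3 x4 hPf with hzero | Hrad
    · exact absurd (hzero u1 u2) hcu
    · refine buildN a b ![(a + (1 - ζ) • b).flip x1, (a + (1 - ζ) • b).flip x2,
        (a + (1 - ζ) • b).flip x3, (a + (1 - ζ) • b).flip x4] (fun v hv w => ?_)
      have e1 := hv 0; have e2 := hv 1; have e3 := hv 2; have e4 := hv 3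
      simp only [Matrix.cons_val_zero, Matrix.cons_val_one, Matrix.head_cons,
        Matrix.cons_val_two, Matrix.tail_cons, Matrix.cons_val_three,
        LinearMap.flip_apply, LinearMap.add_apply, LinearMap.smul_apply, smul_eq_mul]
        at e1 e2 e3 e4
      obtain ⟨h2, h1⟩ := Hrad v e1 e2 e3 e4 w
      exact recov v w h1 h2
  · push_neg at hPfc hPfd
    refine buildN a b ![(a + ζ • b).flip u1, (a + ζ • b).flip u2,
      (a + (1 - ζ) • b).flip u3, (a + (1 - ζ) • b).flip u4] (fun v hv w => ?_)
    have e1 := hv 0; have e2 := hv 1; have e3 := hv 2; have e4 := hv 3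
    simp only [Matrix.cons_val_zero, Matrix.cons_val_one, Matrix.head_cons,
      Matrix.cons_val_two, Matrix.tail_cons, Matrix.cons_val_three,
      LinearMap.flip_apply, LinearMap.add_apply, LinearMap.smul_apply, smul_eq_mul]
      at e1 e2 e3 e4
    have h1 : c v w = 0 := by
      have k := hPfc v w u1 u2
      have k2 : c v w * c u1 u2 = 0 := by
        have hvw1 : c v u1 = 0 := e1
        have hvw2 : c v u2 = 0 := e2
        linear_combination k + c w u2 * hvw1 - c w u1 * hvw2
      exact (mul_eq_zero.mp k2).resolve_right hcu
    have h2 : d v w = 0 := by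
      have k := hPfd v w u3 u4
      have k2 : d v w * d u3 u4 = 0 := by
        have hvw3 : d v u3 = 0 := e3
        have hvw4 : d v u4 = 0 := e4
        linear_combination k + d w u4 * hvw3 - d w u3 * hvw4
      exact (mul_eq_zero.mp k2).resolve_right hdu
    exact recov v w h1 h2

/-- Algebraic core of Proposition 2.4: if `a`, `b` are alternating bilinear forms on a
finite-dimensional complex vector space with `a∧a + a∧b + b∧b = 0` in `⋀⁴V*`, then
either `a + ((1+i√3)/2)·b = 0`, or `a + ((1−i√3)/2)·b = 0`, or there is a subspace
`N ⊆ V` of codimension at most 4 contained in the radical of both `a` and `b`. -/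
theorem wedge_relation_trichotomy
    {V : Type*} [AddCommGroup V] [Module ℂ V] [FiniteDimensional ℂ V]
    (a b : LinearMap.BilinForm ℂ V)
    (hAlta : LinearMap.IsAlt a) (hAltb : LinearMap.IsAlt b)
    (hrel : ∀ x₁ x₂ x₃ x₄ : V,
      wedgeProd (fun u w => a u w) (fun u w => a u w) x₁ x₂ x₃ x₄
      + wedgeProd (fun u w => a u w) (fun u w => b u w) x₁ x₂ x₃ x₄
      + wedgeProd (fun u w => b u w) (fun u w => b u w) x₁ x₂ x₃ x₄ = 0) :
    a + (((1 : ℂ) + Real.sqrt 3 * Complex.I) / 2) • b = 0 ∨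
    a + (((1 : ℂ) - Real.sqrt 3 * Complex.I) / 2) • b = 0 ∨
    ∃ N : Submodule ℂ V,
      Module.finrank ℂ V - Module.finrank ℂ N ≤ 4 ∧
      ∀ v ∈ N, ∀ w : V, a v w = 0 ∧ b v w = 0 := by
  have hs : ((Real.sqrt 3 : ℂ)) ^ 2 = 3 := by
    norm_cast
    exact Real.sq_sqrt (by norm_num)
  have hζ : (((1 : ℂ) + Real.sqrt 3 * Complex.I) / 2) ^ 2
      - (((1 : ℂ) + Real.sqrt 3 * Complex.I) / 2) + 1 = 0 := by
    linear_combination (Complex.I ^ 2 / 4) * hs + (3 / 4 : ℂ) * Complex.I_sq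
  rcases mainAux a b _ hζ hrel with h | h | h
  · exact Or.inl h
  · right; left
    have : ((1 : ℂ) - Real.sqrt 3 * Complex.I) / 2
        = 1 - ((1 : ℂ) + Real.sqrt 3 * Complex.I) / 2 := by ring
    rw [this]
    exact h
  · exact Or.inr (Or.inr h)
end
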